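/- Let K be a bounded linear operator on H with Moore–Penrose pseudoinverse P, and let F = (f_1,…,f_N) be a Parseval K-frame for H. Set L = max_{1≤i≤N} ‖f_i‖·‖P f_i‖ and Λ₁ = { i : ‖f_i‖·‖P f_i‖ = L }. Suppose the family { f_i : i ∈ Λ₁ } is linearly independent and there exist scalars c_1,…,c_N with c_i ≠ 0 for all i ∈ Λ₁ such that ∑_{i=1}^N c_i f_i = 0. Then there exists a K-dual G = (g_1,…,g_N) of F with max_{1≤i≤N} ‖f_i‖·‖g_i‖ < L (so the canonical K-dual is not optimal for one erasure under the operator norm). -/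

import Mathlib

local notation "⟪" x ", " y "⟫" => @inner ℂ _ _ x y

/-!
Since `∑ cᵢ fᵢ = 0`, adding `conj(cᵢ) • u` to the canonical `K`-dual `P fᵢ` gives another
`K`-dual, for any vector `u`. Because the `P fᵢ` with `i ∈ Λ₁` are linearly independent (`K` maps
them to the `fᵢ`), `u` can be chosen with `⟪P fᵢ, u⟫ = -cᵢ` on `Λ₁`. Then, for the dual
`gᵢ = P fᵢ + conj(cᵢ) • (t • u)`, `‖gᵢ‖² = ‖P fᵢ‖² - 2t|cᵢ|² + O(t²)` on `Λ₁`, so the products that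
attained `L` decrease for small `t > 0`, while the others stay below `L` by continuity.
-/

open Filter Topology ComplexConjugate

section InnerProduct

open scoped InnerProductSpace

variable {𝕜 E ι : Type*} [RCLike 𝕜] [NormedAddCommGroup E] [InnerProductSpace 𝕜 E]

theorem LinearIndependent.exists_inner_eq [FiniteDimensional 𝕜 E] [Fintype ι] {v : ι → E}
    (hv : LinearIndependent 𝕜 v) (a : ι → 𝕜) : ∃ u : E, ∀ i, ⟪v i, u⟫_𝕜 = a i := by
  classical
  have := FiniteDimensional.complete 𝕜 E
  obtain ⟨g, hg⟩ := (Fintype.linearCombination 𝕜 v).exists_leftInverse_of_injective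
    (LinearMap.ker_eq_bot.2 (linearIndependent_iff_injective_fintypeLinearCombination.1 hv))
  have hgv : ∀ i, g (v i) = Pi.single i 1 := fun i => by
    simpa using LinearMap.congr_fun hg (Pi.single i 1)
  -- `u` is the Riesz representative of a functional taking the values `conj (a i)` on the `v i`
  let φ : E →ₗ[𝕜] 𝕜 := ∑ i, star (a i) • LinearMap.proj i ∘ₗ g
  refine ⟨(InnerProductSpace.toDual 𝕜 E).symm (LinearMap.toContinuousLinearMap φ), fun i => ?_⟩
  rw [← inner_conj_symm, InnerProductSpace.toDual_symm_apply]
  simp [φ, hgv, Pi.single_apply]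

theorem norm_add_ofReal_smul_sq (x w : E) (t : ℝ) :
    ‖x + (t : 𝕜) • w‖ ^ 2 = ‖x‖ ^ 2 + t * (2 * RCLike.re ⟪x, w⟫_𝕜 + t * ‖w‖ ^ 2) := by
  rw [@norm_add_sq 𝕜, inner_smul_right, RCLike.re_ofReal_mul, norm_smul, RCLike.norm_ofReal,
    mul_pow, sq_abs]
  ring

theorem eventually_norm_add_ofReal_smul_lt {x w : E} (h : RCLike.re ⟪x, w⟫_𝕜 < 0) :
    ∀ᶠ t : ℝ in 𝓝[>] 0, ‖x + (t : 𝕜) • w‖ < ‖x‖ := by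
  have hε : 0 < -2 * RCLike.re ⟪x, w⟫_𝕜 / (‖w‖ ^ 2 + 1) := by
    apply div_pos <;> nlinarith [sq_nonneg ‖w‖]
  -- for `0 < t < ε` the term `t * ‖w‖ ^ 2` cannot compensate `2 * re ⟪x, w⟫`
  filter_upwards [Ioo_mem_nhdsGT hε] with t ⟨ht0, htε⟩
  rw [lt_div_iff₀ (by positivity)] at htε
  refine lt_of_pow_lt_pow_left₀ 2 (norm_nonneg x) ?_
  rw [norm_add_ofReal_smul_sq]
  nlinarith [sq_nonneg ‖w‖]

theorem eventually_mul_norm_add_ofReal_smul_lt {a r : ℝ} {x w : E} (hle : a * ‖x‖ ≤ r)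
    (hmax : a * ‖x‖ = r → 0 < a ∧ RCLike.re ⟪x, w⟫_𝕜 < 0) :
    ∀ᶠ t : ℝ in 𝓝[>] 0, a * ‖x + (t : 𝕜) • w‖ < r := by
  rcases hle.eq_or_lt with heq | hlt
  · obtain ⟨ha, hre⟩ := hmax heq
    filter_upwards [eventually_norm_add_ofReal_smul_lt hre] with t ht
    exact heq ▸ mul_lt_mul_of_pos_left ht ha
  · have hcont : Continuous fun t : ℝ => a * ‖x + (t : 𝕜) • w‖ := by fun_prop
    exact nhdsWithin_le_nhds <| (hcont.tendsto 0).eventually (gt_mem_nhds (by simpa using hlt))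

end InnerProduct

theorem ContinuousLinearMap.apply_apply_eq_of_mem_closure_range {R M : Type*} [Ring R]
    [AddCommGroup M] [Module R M] [TopologicalSpace M] [IsTopologicalAddGroup M]
    [ContinuousConstSMul R M] [T1Space M] {K P : M →L[R] M} (hKPK : K ∘L P ∘L K = K) {x : M}
    (hx : x ∈ K.range.topologicalClosure) : K (P x) = x := by
  have hrange : K.range ≤ (K ∘L P - 1).ker := by
    rintro _ ⟨y, rfl⟩
    simpa [sub_eq_zero] using congr($hKPK y)
  simpa [sub_eq_zero] using
    Submodule.topologicalClosure_minimal _ hrange (K ∘L P - 1).isClosed_ker hx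

section KFrame

variable {H ι : Type*} [NormedAddCommGroup H] [InnerProductSpace ℂ H] [Fintype ι]

def IsKDual (K : H →L[ℂ] H) (F G : ι → H) : Prop :=
  ∀ f : H, K f = ∑ i, ⟪G i, f⟫ • F i

theorem IsKDual.add_conj_smul {K : H →L[ℂ] H} {F G : ι → H} (hG : IsKDual K F G) {c : ι → ℂ}
    (hc : ∑ i, c i • F i = 0) (u : H) : IsKDual K F fun i => G i + conj (c i) • u := by
  intro f
  rw [hG f]
  simp only [inner_add_left, inner_smul_left, add_smul, Finset.sum_add_distrib,
    Complex.conj_conj, mul_comm (c _), mul_smul, ← Finset.smul_sum, hc, smul_zero, add_zero]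

variable [CompleteSpace H]

def IsParsevalKFrame (K : H →L[ℂ] H) (F : ι → H) : Prop :=
  ∀ f : H, ∑ i, ‖⟪F i, f⟫‖ ^ 2 = ‖ContinuousLinearMap.adjoint K f‖ ^ 2

namespace IsParsevalKFrame

variable {K : H →L[ℂ] H} {F : ι → H}

theorem sum_inner_smul_eq (hF : IsParsevalKFrame K F) (g : H) :
    ∑ i, ⟪F i, g⟫ • F i = K (ContinuousLinearMap.adjoint K g) := by
  let S : H →ₗ[ℂ] H := ∑ i, (innerₛₗ ℂ (F i)).smulRight (F i)
  suffices S = (K ∘L ContinuousLinearMap.adjoint K : H →L[ℂ] H) by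
    simpa [S] using congr($this g)
  -- over `ℂ`, an operator is determined by its quadratic form
  refine (ext_inner_map _ _).1 fun x => ?_
  have hS : ⟪S x, x⟫ = ∑ i, ((‖⟪F i, x⟫‖ ^ 2 : ℝ) : ℂ) := by
    have hSx : S x = ∑ i, ⟪F i, x⟫ • F i := by simp [S]
    simp only [hSx, sum_inner, inner_smul_left, RCLike.conj_mul]
    push_cast; rfl
  have hK : ⟪K (ContinuousLinearMap.adjoint K x), x⟫ =
      ((‖ContinuousLinearMap.adjoint K x‖ ^ 2 : ℝ) : ℂ) := by
    rw [← ContinuousLinearMap.adjoint_inner_right, inner_self_eq_norm_sq_to_K]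
    push_cast; rfl
  change ⟪S x, x⟫ = ⟪K (ContinuousLinearMap.adjoint K x), x⟫
  rw [hS, hK, ← hF x]
  push_cast; rfl

theorem mem_closure_range (hF : IsParsevalKFrame K F) (i : ι) :
    F i ∈ K.range.topologicalClosure := by
  have hker : F i ∈ (ContinuousLinearMap.adjoint K).kerᗮ := by
    rw [Submodule.mem_orthogonal']
    intro z hz
    have hz' : ContinuousLinearMap.adjoint K z = 0 := hz
    have hsum : ∑ j, ‖⟪F j, z⟫‖ ^ 2 = 0 := by simpa [hz'] using hF z
    simpa using (Finset.sum_eq_zero_iff_of_nonneg (fun j _ => by positivity)).1 hsum i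
  simpa [ContinuousLinearMap.orthogonal_ker] using hker

theorem apply_pinv_apply (hF : IsParsevalKFrame K F) {P : H →L[ℂ] H} (hKPK : K ∘L P ∘L K = K)
    (i : ι) : K (P (F i)) = F i :=
  ContinuousLinearMap.apply_apply_eq_of_mem_closure_range hKPK (hF.mem_closure_range i)

theorem isKDual_pinv (hF : IsParsevalKFrame K F) {P : H →L[ℂ] H} (hKPK : K ∘L P ∘L K = K)
    (hPK : IsSelfAdjoint (P ∘L K)) : IsKDual K F fun i => P (F i) := by
  intro f
  have hadj : ContinuousLinearMap.adjoint K ∘L ContinuousLinearMap.adjoint P = P ∘L K := by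
    simpa [ContinuousLinearMap.adjoint_comp] using hPK.adjoint_eq
  calc K f = K (P (K f)) := congr($hKPK f).symm
    _ = K (ContinuousLinearMap.adjoint K (ContinuousLinearMap.adjoint P f)) := by
      rw [← ContinuousLinearMap.comp_apply _ (ContinuousLinearMap.adjoint P), hadj]; rfl
    _ = ∑ i, ⟪P (F i), f⟫ • F i := by
      simp [← hF.sum_inner_smul_eq, ContinuousLinearMap.adjoint_inner_right]

end IsParsevalKFrame

end KFrame

theorem stmt14_general
    {H : Type*} [NormedAddCommGroup H] [InnerProductSpace ℂ H] [FiniteDimensional ℂ H]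
    {N : ℕ} (hN : 1 ≤ N)
    (K P : H →L[ℂ] H)
    (hP1 : K ∘L P ∘L K = K)
    (hP4 : IsSelfAdjoint (P ∘L K))
    (F : Fin N → H)
    (hParseval : ∀ f : H,
      ∑ i, ‖⟪F i, f⟫‖ ^ 2 = ‖ContinuousLinearMap.adjoint K f‖ ^ 2)
    (L : ℝ) (hL : L = ⨆ i, ‖F i‖ * ‖P (F i)‖)
    (hind : LinearIndependent ℂ (fun i : {i : Fin N // ‖F i‖ * ‖P (F i)‖ = L} => F i.1))
    (c : Fin N → ℂ)
    (hc : ∀ i, ‖F i‖ * ‖P (F i)‖ = L → c i ≠ 0)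
    (hsum : ∑ i, c i • F i = 0) :
    ∃ G : Fin N → H, (∀ f : H, K f = ∑ i, ⟪G i, f⟫ • F i) ∧
      (⨆ i, ‖F i‖ * ‖G i‖) < L := by
  have : Nonempty (Fin N) := ⟨⟨0, hN⟩⟩
  have hF : IsParsevalKFrame K F := hParseval
  have hle : ∀ i, ‖F i‖ * ‖P (F i)‖ ≤ L := fun i =>
    hL ▸ le_ciSup (Set.finite_range fun i => ‖F i‖ * ‖P (F i)‖).bddAbove i
  have hPind : LinearIndependent ℂ (fun i : {i : Fin N // ‖F i‖ * ‖P (F i)‖ = L} => P (F i.1)) :=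
    .of_comp K.toLinearMap <| by simpa [Function.comp_def, hF.apply_pinv_apply hP1] using hind
  obtain ⟨u, hu⟩ := hPind.exists_inner_eq fun i => -c i.1
  have hsmall : ∀ i, ∀ᶠ t : ℝ in 𝓝[>] 0,
      ‖F i‖ * ‖P (F i) + (t : ℂ) • conj (c i) • u‖ < L := fun i =>
    eventually_mul_norm_add_ofReal_smul_lt (hle i) fun hi =>
      ⟨norm_pos_iff.2 (hind.ne_zero ⟨i, hi⟩), by
        simpa [inner_smul_right, hu ⟨i, hi⟩, Complex.conj_mul', ← Complex.ofReal_pow] using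
          pow_pos (norm_pos_iff.2 (hc i hi)) 2⟩
  obtain ⟨t, ht⟩ := (eventually_all.2 hsmall).exists
  have hdual := (hF.isKDual_pinv hP1 hP4).add_conj_smul hsum ((t : ℂ) • u)
  simp_rw [smul_comm (conj _) (t : ℂ)] at hdual
  refine ⟨_, hdual, ?_⟩
  obtain ⟨i, hi⟩ := Finite.exists_max fun i => ‖F i‖ * ‖P (F i) + (t : ℂ) • conj (c i) • u‖
  exact (ciSup_le hi).trans_lt (ht i)

/-- Let `K` be a bounded operator on `H` with Moore–Penrose pseudoinverse `P`
and `F` a Parseval `K`-frame.  With `L = max_i ‖f_i‖·‖P f_i‖` and `Λ₁` the set of indices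
attaining `L`: if `{f_i : i ∈ Λ₁}` is linearly independent and there are scalars `c_i`,
nonzero for all `i ∈ Λ₁`, with `∑ c_i f_i = 0`, then some `K`-dual `G` of `F` satisfies
`max_i ‖f_i‖·‖g_i‖ < L` (so the canonical `K`-dual is not 1-erasure optimal). -/
theorem stmt14
    {H : Type*} [NormedAddCommGroup H] [InnerProductSpace ℂ H] [FiniteDimensional ℂ H]
    (hdim : 1 ≤ Module.finrank ℂ H)
    {N : ℕ} (hN : 1 ≤ N)
    (K P : H →L[ℂ] H)
    (hP1 : K ∘L P ∘L K = K) (hP2 : P ∘L K ∘L P = P)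
    (hP3 : IsSelfAdjoint (K ∘L P)) (hP4 : IsSelfAdjoint (P ∘L K))
    (F : Fin N → H)
    (hParseval : ∀ f : H,
      ∑ i, ‖⟪F i, f⟫‖ ^ 2 = ‖ContinuousLinearMap.adjoint K f‖ ^ 2)
    (L : ℝ) (hL : L = ⨆ i, ‖F i‖ * ‖P (F i)‖)
    (hind : LinearIndependent ℂ (fun i : {i : Fin N // ‖F i‖ * ‖P (F i)‖ = L} => F i.1))
    (c : Fin N → ℂ)
    (hc : ∀ i, ‖F i‖ * ‖P (F i)‖ = L → c i ≠ 0)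
    (hsum : ∑ i, c i • F i = 0) :
    ∃ G : Fin N → H, (∀ f : H, K f = ∑ i, ⟪G i, f⟫ • F i) ∧
      (⨆ i, ‖F i‖ * ‖G i‖) < L :=
  stmt14_general hN K P hP1 hP4 F hParseval L hL hind c hc hsum
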